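/- arXiv:2505.00304 — 2 statements merged into one kernel-verified Lean document; each statement's English description precedes it below -/
import Mathlib

section
/- Let H be a real Hilbert space, m a positive integer, v₁, …, v_m ∈ H, δ ∈ ℝ^m, and μ > 0. Let K be the m × m Gram matrix with entries K_{ij} = ⟪v_i, v_j⟫, which is symmetric positive semidefinite, and let K^{1/2} denote its positive semidefinite square root. Then the matrix I + (2mμ)^{-1} K is positive definite (hence invertible), and the supremum over all f ∈ H of the strictly concave objective (1/m) Σ_{i=1}^m δ_i ⟪f, v_i⟫ − (1/(2m)) Σ_{i=1}^m ⟪f, v_i⟫² − μ ‖f‖² equals (1/(4 μ m²)) · δᵀ K^{1/2} (I + (2mμ)^{-1} K)^{-1} K^{1/2} δ. -/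
/-!
Write `J` for the objective, `α = 1/m` and `c = α / (2μ) = (2mμ)⁻¹`. The maximizer lies in the
span of the `vᵢ` (representer theorem): `f⋆ = ∑ aᵢ vᵢ` with `a = c (1 + c K)⁻¹ δ`, i.e.
`α (δ - K a) = 2μ a`. This first-order condition kills the linear term of the expansion
`J (f⋆ + g) = J f⋆ - (α/2 ∑ ⟪g, vᵢ⟫² + μ ‖g‖²)`, so `f⋆` is the maximizer and the supremum is
`J f⋆ = (α/2) δᵀ K a = (α c / 2) δᵀ K (1 + c K)⁻¹ δ`. Finally `K^{1/2}` commutes with `K`, hence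
with `(1 + c K)⁻¹`, so `K^{1/2} (1 + c K)⁻¹ K^{1/2} = K (1 + c K)⁻¹`.
-/

open Matrix

/-- The positive semidefinite square root of a positive semidefinite matrix, as defined in the
older Mathlib (removed since). -/
noncomputable def Matrix.PosSemidef.sqrt {n : Type*} [Fintype n] [DecidableEq n] {𝕜 : Type*}
    [RCLike 𝕜] [PartialOrder 𝕜] {A : Matrix n n 𝕜} (hA : A.PosSemidef) : Matrix n n 𝕜 :=
  hA.1.eigenvectorUnitary.1 * diagonal ((↑) ∘ (fun x : ℝ => Real.sqrt x) ∘ hA.1.eigenvalues) *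
    (star hA.1.eigenvectorUnitary : Matrix n n 𝕜)

open scoped ComplexOrder

namespace Matrix

variable {n : Type*} [DecidableEq n]

theorem PosSemidef.sqrt_mul_sqrt [Fintype n] {𝕜 : Type*} [RCLike 𝕜] {A : Matrix n n 𝕜}
    (hA : A.PosSemidef) : hA.sqrt * hA.sqrt = A := by
  have hU : ∀ X : Matrix n n 𝕜, star (hA.1.eigenvectorUnitary : Matrix n n 𝕜) *
      ((hA.1.eigenvectorUnitary : Matrix n n 𝕜) * X) = X := fun X => by
    rw [← Matrix.mul_assoc, Unitary.star_mul_self_of_mem hA.1.eigenvectorUnitary.2,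
      Matrix.one_mul]
  conv_rhs => rw [hA.1.spectral_theorem]
  simp only [PosSemidef.sqrt, Unitary.conjStarAlgAut_apply, Matrix.mul_assoc, hU]
  rw [← Matrix.mul_assoc (diagonal _), diagonal_mul_diagonal]
  congr 3
  ext i
  simp only [Function.comp_apply, ← RCLike.ofReal_mul,
    Real.mul_self_sqrt (hA.eigenvalues_nonneg i)]

theorem commute_nonsing_inv_right [Fintype n] {α : Type*} [CommRing α] {A B : Matrix n n α}
    (h : Commute A B) : Commute A B⁻¹ := by
  by_cases hB : IsUnit B
  · have := h.units_inv_right (u := hB.unit)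
    rwa [coe_units_inv, IsUnit.unit_spec] at this
  · rw [nonsing_inv_eq_ringInverse, Ring.inverse_non_unit _ hB]
    exact Commute.zero_right A

theorem PosSemidef.posDef_one_add_smul {𝕜 : Type*} [RCLike 𝕜] {A : Matrix n n 𝕜}
    (hA : A.PosSemidef) {c : ℝ} (hc : 0 ≤ c) : (1 + c • A).PosDef :=
  PosDef.one.add_posSemidef (hA.smul hc)

theorem PosSemidef.sqrt_mul_nonsing_inv_mul_sqrt [Fintype n] {𝕜 : Type*} [RCLike 𝕜]
    {A : Matrix n n 𝕜} (hA : A.PosSemidef) (c : 𝕜) :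
    hA.sqrt * (1 + c • A)⁻¹ * hA.sqrt = A * (1 + c • A)⁻¹ := by
  have hcomm : Commute hA.sqrt A := by
    have h := (Commute.refl hA.sqrt).mul_right (Commute.refl hA.sqrt)
    rwa [hA.sqrt_mul_sqrt] at h
  have hinv : Commute hA.sqrt (1 + c • A)⁻¹ :=
    commute_nonsing_inv_right ((Commute.one_right _).add_right (hcomm.smul_right c))
  rw [Matrix.mul_assoc, ← hinv.eq, ← Matrix.mul_assoc, hA.sqrt_mul_sqrt]

end Matrix

section RegularizedObjective

variable {H ι : Type*} [NormedAddCommGroup H] [InnerProductSpace ℝ H] [Fintype ι]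

noncomputable def regularizedObjective (α μ : ℝ) (v : ι → H) (δ : ι → ℝ) (f : H) : ℝ :=
  α * ∑ i, δ i * inner ℝ f (v i) - α / 2 * ∑ i, inner ℝ f (v i) ^ 2 - μ * ‖f‖ ^ 2

variable (α μ : ℝ) (v : ι → H) (δ : ι → ℝ)

theorem regularizedObjective_add (f g : H) :
    regularizedObjective α μ v δ (f + g) = regularizedObjective α μ v δ f
      + (α * ∑ i, (δ i - inner ℝ f (v i)) * inner ℝ g (v i) - 2 * μ * inner ℝ f g)
      - (α / 2 * ∑ i, inner ℝ g (v i) ^ 2 + μ * ‖g‖ ^ 2) := by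
  simp only [regularizedObjective, inner_add_left, norm_add_sq_real, add_sq, mul_add, sub_mul,
    Finset.sum_add_distrib, Finset.sum_sub_distrib, mul_assoc, ← Finset.mul_sum]
  ring

theorem sum_smul_inner_eq_gram_mulVec (a : ι → ℝ) (j : ι) :
    inner ℝ (∑ i, a i • v i) (v j) = (gram ℝ v *ᵥ a) j := by
  simp only [sum_inner, real_inner_smul_left, mulVec, dotProduct, gram_apply]
  exact Finset.sum_congr rfl fun i _ => by rw [real_inner_comm, mul_comm]

variable {α μ v δ} {a : ι → ℝ}

theorem regularizedObjective_add_of_stationary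
    (hstat : ∀ i, α * (δ i - (gram ℝ v *ᵥ a) i) = 2 * μ * a i) (g : H) :
    regularizedObjective α μ v δ (∑ i, a i • v i + g)
      = regularizedObjective α μ v δ (∑ i, a i • v i)
        - (α / 2 * ∑ i, inner ℝ g (v i) ^ 2 + μ * ‖g‖ ^ 2) := by
  have hlin : α * ∑ i, (δ i - inner ℝ (∑ j, a j • v j) (v i)) * inner ℝ g (v i)
      = 2 * μ * inner ℝ (∑ i, a i • v i) g := by
    simp only [sum_smul_inner_eq_gram_mulVec, Finset.mul_sum, ← mul_assoc, hstat]
    rw [real_inner_comm g, inner_sum, Finset.mul_sum]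
    simp only [real_inner_smul_right, mul_assoc]
  rw [regularizedObjective_add, hlin, sub_self, add_zero]

theorem regularizedObjective_le_of_stationary (hα : 0 ≤ α) (hμ : 0 ≤ μ)
    (hstat : ∀ i, α * (δ i - (gram ℝ v *ᵥ a) i) = 2 * μ * a i) (f : H) :
    regularizedObjective α μ v δ f ≤ regularizedObjective α μ v δ (∑ i, a i • v i) := by
  have h := regularizedObjective_add_of_stationary hstat (f - ∑ i, a i • v i)
  rw [add_sub_cancel] at h
  rw [h, sub_le_self_iff]
  positivity

theorem regularizedObjective_of_stationary
    (hstat : ∀ i, α * (δ i - (gram ℝ v *ᵥ a) i) = 2 * μ * a i) :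
    regularizedObjective α μ v δ (∑ i, a i • v i) = α / 2 * δ ⬝ᵥ (gram ℝ v *ᵥ a) := by
  have hnorm : ‖∑ i, a i • v i‖ ^ 2 = a ⬝ᵥ (gram ℝ v *ᵥ a) := by
    rw [← real_inner_self_eq_norm_sq, ← star_dotProduct_gram_mulVec, star_trivial]
  have hsum : α * (δ ⬝ᵥ (gram ℝ v *ᵥ a)) - α * ((gram ℝ v *ᵥ a) ⬝ᵥ (gram ℝ v *ᵥ a))
      = 2 * μ * (a ⬝ᵥ (gram ℝ v *ᵥ a)) := by
    simp only [dotProduct, Finset.mul_sum, ← Finset.sum_sub_distrib]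
    exact Finset.sum_congr rfl fun i _ => by linear_combination (gram ℝ v *ᵥ a) i * hstat i
  simp only [regularizedObjective, hnorm, sum_smul_inner_eq_gram_mulVec]
  simp only [dotProduct, sq] at hsum ⊢
  linear_combination hsum / 2

theorem iSup_regularizedObjective [DecidableEq ι] (hα : 0 ≤ α) (hμ : 0 < μ) :
    ⨆ f, regularizedObjective α μ v δ f
      = α ^ 2 / (4 * μ) * δ ⬝ᵥ ((gram ℝ v * (1 + (α / (2 * μ)) • gram ℝ v)⁻¹) *ᵥ δ) := by
  set c := α / (2 * μ) with hc
  set N := 1 + c • gram ℝ v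
  have hNdet : IsUnit N.det := (isUnit_iff_isUnit_det N).1
    ((posSemidef_gram ℝ v).posDef_one_add_smul (by positivity)).isUnit
  set a := c • (N⁻¹ *ᵥ δ)
  have hNa : a + c • (gram ℝ v *ᵥ a) = c • δ := by
    calc a + c • (gram ℝ v *ᵥ a) = N *ᵥ a := by
          simp only [N, add_mulVec, one_mulVec, smul_mulVec]
      _ = c • δ := by rw [mulVec_smul, mulVec_mulVec, mul_nonsing_inv _ hNdet, one_mulVec]
  have hstat : ∀ i, α * (δ i - (gram ℝ v *ᵥ a) i) = 2 * μ * a i := fun i => by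
    have h2μc : 2 * μ * c = α := by rw [hc]; field_simp
    have hNai := congrFun hNa i
    simp only [Pi.add_apply, Pi.smul_apply, smul_eq_mul] at hNai
    linear_combination (-2 * μ) * hNai - (δ i - (gram ℝ v *ᵥ a) i) * h2μc
  have hbdd : BddAbove (Set.range (regularizedObjective α μ v δ)) :=
    ⟨_, Set.forall_mem_range.2 (regularizedObjective_le_of_stationary hα hμ.le hstat)⟩
  have hsup : ⨆ f, regularizedObjective α μ v δ f = regularizedObjective α μ v δ (∑ i, a i • v i) :=
    le_antisymm (ciSup_le (regularizedObjective_le_of_stationary hα hμ.le hstat)) (le_ciSup hbdd _)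
  rw [hsup, regularizedObjective_of_stationary hstat, mulVec_smul, ← mulVec_mulVec,
    dotProduct_smul, smul_eq_mul, hc]
  ring

end RegularizedObjective

theorem stmt_1_general {H : Type*} [NormedAddCommGroup H] [InnerProductSpace ℝ H]
    {m : ℕ} (v : Fin m → H) (δ : Fin m → ℝ) (μ : ℝ) (hμ : 0 < μ)
    (K : Matrix (Fin m) (Fin m) ℝ)
    (hKdef : ∀ i j, K i j = (inner ℝ (v i) (v j) : ℝ)) (hK : K.PosSemidef) :
    (1 + (2 * (m : ℝ) * μ)⁻¹ • K).PosDef ∧ IsUnit (1 + (2 * (m : ℝ) * μ)⁻¹ • K) ∧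
    (⨆ f : H, ((1 / (m : ℝ)) * ∑ i, δ i * (inner ℝ f (v i) : ℝ)
        - (1 / (2 * (m : ℝ))) * ∑ i, (inner ℝ f (v i) : ℝ) ^ 2 - μ * ‖f‖ ^ 2))
      = (1 / (4 * μ * (m : ℝ) ^ 2)) *
        (δ ⬝ᵥ ((hK.sqrt * (1 + (2 * (m : ℝ) * μ)⁻¹ • K)⁻¹ * hK.sqrt) *ᵥ δ)) := by
  have hN : (1 + (2 * (m : ℝ) * μ)⁻¹ • K).PosDef := hK.posDef_one_add_smul (by positivity)
  have hKgram : K = gram ℝ v := Matrix.ext hKdef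
  have hc : (2 * (m : ℝ) * μ)⁻¹ = 1 / m / (2 * μ) := by ring
  refine ⟨hN, hN.isUnit, ?_⟩
  calc (⨆ f : H, _) = ⨆ f, regularizedObjective (1 / m) μ v δ f := by
        congr 1; ext f; simp only [regularizedObjective]; ring
    _ = _ := by
        rw [iSup_regularizedObjective (by positivity) hμ, hK.sqrt_mul_nonsing_inv_mul_sqrt, hc,
          hKgram]
        ring

/-- Closed-form solution of the inner maximization of the regularized finite-sample minimax
estimator: with Gram matrix `K_{ij} = ⟪v_i, v_j⟫` (symmetric positive semidefinite, with
positive semidefinite square root `K^{1/2}`), the matrix `I + (2mμ)⁻¹ K` is positive definite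
(hence invertible), and
`sup_{f ∈ H} (1/m) ∑ δ_i ⟪f, v_i⟫ − (1/(2m)) ∑ ⟪f, v_i⟫² − μ‖f‖²
  = (1/(4μm²)) δᵀ K^{1/2} (I + (2mμ)⁻¹ K)⁻¹ K^{1/2} δ`. -/
theorem stmt_1 {H : Type*} [NormedAddCommGroup H] [InnerProductSpace ℝ H]
    {m : ℕ} (hm : 0 < m) (v : Fin m → H) (δ : Fin m → ℝ) (μ : ℝ) (hμ : 0 < μ)
    (K : Matrix (Fin m) (Fin m) ℝ)
    (hKdef : ∀ i j, K i j = (inner ℝ (v i) (v j) : ℝ)) (hK : K.PosSemidef) :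
    (1 + (2 * (m : ℝ) * μ)⁻¹ • K).PosDef ∧ IsUnit (1 + (2 * (m : ℝ) * μ)⁻¹ • K) ∧
    (⨆ f : H, ((1 / (m : ℝ)) * ∑ i, δ i * (inner ℝ f (v i) : ℝ)
        - (1 / (2 * (m : ℝ))) * ∑ i, (inner ℝ f (v i) : ℝ) ^ 2 - μ * ‖f‖ ^ 2))
      = (1 / (4 * μ * (m : ℝ) ^ 2)) *
        (δ ⬝ᵥ ((hK.sqrt * (1 + (2 * (m : ℝ) * μ)⁻¹ • K)⁻¹ * hK.sqrt) *ᵥ δ)) :=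
  stmt_1_general v δ μ hμ K hKdef hK
end

section
/- Let (X, 𝒜, μ) be a probability space, κ a Markov kernel from X to X, r : X → ℝ bounded measurable, γ ∈ [0, 1), and C ≥ 0 a constant such that ∫ (∫ g(y) d(κ x)(y))² dμ(x) ≤ C² ∫ g(x)² dμ(x) for every bounded measurable g : X → ℝ, with γ C < 1. Suppose Q : X → ℝ is bounded measurable and satisfies the Bellman equation Q(x) = r(x) + γ ∫ Q(y) d(κ x)(y) for μ-almost every x. Then for every bounded measurable q : X → ℝ, ‖q − Q‖_{L²(μ)} ≤ (1 − γ C)^{-1} ‖q − (r + γ κ q)‖_{L²(μ)}, where (κ q)(x) = ∫ q(y) d(κ x)(y). -/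
/-!
Write `e = q - Q`. Subtracting the Bellman equation for `Q` from the residual of `q` shows that
the residual is `e - γ κ e` almost everywhere. By Minkowski and the operator bound,
`‖e‖ ≤ ‖e - γ κ e‖ + γ ‖κ e‖ ≤ ‖e - γ κ e‖ + γ C ‖e‖`, and `γ C < 1` lets us solve for `‖e‖`.
-/

open MeasureTheory ProbabilityTheory

section L2

variable {X : Type*} [MeasurableSpace X] {μ : Measure X}

theorem memLp_of_abs_le [IsFiniteMeasure μ] {f : X → ℝ} (hf : Measurable f) {M : ℝ}
    (hM : ∀ x, |f x| ≤ M) (p : ENNReal) : MemLp f p μ :=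
  .of_bound hf.aestronglyMeasurable M (ae_of_all _ hM)

theorem sqrt_integral_sq_eq_toReal_eLpNorm {f : X → ℝ} (hf : MemLp f 2 μ) :
    √(∫ x, f x ^ 2 ∂μ) = (eLpNorm f 2 μ).toReal := by
  rw [hf.eLpNorm_eq_integral_rpow_norm two_ne_zero ENNReal.ofNat_ne_top,
    ENNReal.toReal_ofReal (by positivity), Real.sqrt_eq_rpow]
  norm_num [Real.norm_eq_abs]

theorem sqrt_integral_sq_add_le {f g : X → ℝ} (hf : MemLp f 2 μ) (hg : MemLp g 2 μ) :
    √(∫ x, (f x + g x) ^ 2 ∂μ) ≤ √(∫ x, f x ^ 2 ∂μ) + √(∫ x, g x ^ 2 ∂μ) := by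
  have hfg := sqrt_integral_sq_eq_toReal_eLpNorm (hf.add hg)
  simp only [Pi.add_apply] at hfg
  rw [hfg, sqrt_integral_sq_eq_toReal_eLpNorm hf, sqrt_integral_sq_eq_toReal_eLpNorm hg,
    ← ENNReal.toReal_add hf.eLpNorm_ne_top hg.eLpNorm_ne_top]
  exact ENNReal.toReal_mono (ENNReal.add_ne_top.2 ⟨hf.eLpNorm_ne_top, hg.eLpNorm_ne_top⟩)
    (eLpNorm_add_le hf.1 hg.1 one_le_two)

theorem sqrt_integral_const_mul_sq (c : ℝ) (f : X → ℝ) :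
    √(∫ x, (c * f x) ^ 2 ∂μ) = |c| * √(∫ x, f x ^ 2 ∂μ) := by
  simp_rw [mul_pow]
  rw [integral_const_mul, Real.sqrt_mul (sq_nonneg c), Real.sqrt_sq_eq_abs]

end L2

section Kernel

variable {X Y : Type*} [MeasurableSpace X] [MeasurableSpace Y] (κ : Kernel X Y)

theorem measurable_integral_kernel {g : Y → ℝ} (hg : Measurable g) :
    Measurable fun x ↦ ∫ y, g y ∂κ x :=
  hg.stronglyMeasurable.integral_kernel.measurable

theorem abs_integral_kernel_le [IsMarkovKernel κ] {g : Y → ℝ} {M : ℝ} (hM : ∀ y, |g y| ≤ M)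
    (x : X) : |∫ y, g y ∂κ x| ≤ M := by
  simpa using norm_integral_le_of_norm_le_const (μ := κ x)
    (ae_of_all _ fun y ↦ (Real.norm_eq_abs _).trans_le (hM y))

end Kernel

theorem bellman_residual_ae_eq {X : Type*} [MeasurableSpace X] {μ : Measure X} {κ : Kernel X X} {r Q q : X → ℝ} {γ : ℝ}
    (hQ : ∀ x, Integrable Q (κ x)) (hq : ∀ x, Integrable q (κ x))
    (hQbellman : ∀ᵐ x ∂μ, Q x = r x + γ * ∫ y, Q y ∂κ x) :
    ∀ᵐ x ∂μ, q x - (r x + γ * ∫ y, q y ∂κ x)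
      = (q x - Q x) - γ * ∫ y, (q y - Q y) ∂κ x := by
  filter_upwards [hQbellman] with x hx
  rw [integral_sub (hq x) (hQ x), hx]
  ring

theorem stmt_10_general {X : Type*} [MeasurableSpace X] (μ : Measure X) [IsProbabilityMeasure μ]
    (κ : Kernel X X) [IsMarkovKernel κ]
    (r : X → ℝ)
    (γ : ℝ) (hγ0 : 0 ≤ γ)
    (C : ℝ) (hC0 : 0 ≤ C)
    (hCop : ∀ g : X → ℝ, Measurable g → (∃ M : ℝ, ∀ x, |g x| ≤ M) →
      ∫ x, (∫ y, g y ∂(κ x)) ^ 2 ∂μ ≤ C ^ 2 * ∫ x, (g x) ^ 2 ∂μ)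
    (hγC : γ * C < 1)
    (Q : X → ℝ) (hQm : Measurable Q) (hQb : ∃ M : ℝ, ∀ x, |Q x| ≤ M)
    (hQbellman : ∀ᵐ x ∂μ, Q x = r x + γ * ∫ y, Q y ∂(κ x)) :
    ∀ q : X → ℝ, Measurable q → (∃ M : ℝ, ∀ x, |q x| ≤ M) →
      Real.sqrt (∫ x, (q x - Q x) ^ 2 ∂μ)
        ≤ (1 - γ * C)⁻¹ *
          Real.sqrt (∫ x, (q x - (r x + γ * ∫ y, q y ∂(κ x))) ^ 2 ∂μ) := by
  rintro q hqm ⟨Mq, hMq⟩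
  obtain ⟨MQ, hMQ⟩ := hQb
  set e : X → ℝ := fun x ↦ q x - Q x
  have he : Measurable e := hqm.sub hQm
  have he_le : ∀ x, |e x| ≤ Mq + MQ := fun x ↦ (abs_sub _ _).trans (add_le_add (hMq x) (hMQ x))
  have hκe : MemLp (fun x ↦ ∫ y, e y ∂κ x) 2 μ :=
    memLp_of_abs_le (measurable_integral_kernel κ he) (abs_integral_kernel_le κ he_le) 2
  have hop : √(∫ x, (∫ y, e y ∂κ x) ^ 2 ∂μ) ≤ C * √(∫ x, e x ^ 2 ∂μ) := by
    simpa [Real.sqrt_mul (sq_nonneg C), Real.sqrt_sq hC0] using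
      Real.sqrt_le_sqrt (hCop e he ⟨_, he_le⟩)
  have htri : √(∫ x, e x ^ 2 ∂μ)
      ≤ √(∫ x, (e x - γ * ∫ y, e y ∂κ x) ^ 2 ∂μ) + γ * √(∫ x, (∫ y, e y ∂κ x) ^ 2 ∂μ) := by
    simpa [sqrt_integral_const_mul_sq, abs_of_nonneg hγ0] using
      sqrt_integral_sq_add_le ((memLp_of_abs_le he he_le 2).sub (hκe.const_mul γ))
        (hκe.const_mul γ)
  have hres : ∫ x, (q x - (r x + γ * ∫ y, q y ∂κ x)) ^ 2 ∂μ
      = ∫ x, (e x - γ * ∫ y, e y ∂κ x) ^ 2 ∂μ := by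
    refine integral_congr_ae ?_
    filter_upwards [bellman_residual_ae_eq (fun _ ↦ (memLp_of_abs_le hQm hMQ 1).integrable le_rfl)
      (fun _ ↦ (memLp_of_abs_le hqm hMq 1).integrable le_rfl) hQbellman] with x hx
    rw [hx]
  rw [hres, inv_mul_eq_div, le_div_iff₀ (by linarith)]
  linarith [mul_le_mul_of_nonneg_left hop hγ0]

/-- Bellman-residual-to-estimation-error bound: if the transition operator `κ` is bounded on
`L²(μ)` with constant `C` (over bounded measurable functions), `γC < 1`, and the bounded
measurable `Q` solves the Bellman evaluation equation `Q = r + γ κ Q` μ-a.e., then for every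
bounded measurable `q`,
`‖q − Q‖_{L²(μ)} ≤ (1 − γC)⁻¹ ‖q − (r + γ κ q)‖_{L²(μ)}`. -/
theorem stmt_10 {X : Type*} [MeasurableSpace X] (μ : Measure X) [IsProbabilityMeasure μ]
    (κ : Kernel X X) [IsMarkovKernel κ]
    (r : X → ℝ) (hrm : Measurable r) (hrb : ∃ M : ℝ, ∀ x, |r x| ≤ M)
    (γ : ℝ) (hγ0 : 0 ≤ γ) (hγ1 : γ < 1)
    (C : ℝ) (hC0 : 0 ≤ C)
    (hCop : ∀ g : X → ℝ, Measurable g → (∃ M : ℝ, ∀ x, |g x| ≤ M) →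
      ∫ x, (∫ y, g y ∂(κ x)) ^ 2 ∂μ ≤ C ^ 2 * ∫ x, (g x) ^ 2 ∂μ)
    (hγC : γ * C < 1)
    (Q : X → ℝ) (hQm : Measurable Q) (hQb : ∃ M : ℝ, ∀ x, |Q x| ≤ M)
    (hQbellman : ∀ᵐ x ∂μ, Q x = r x + γ * ∫ y, Q y ∂(κ x)) :
    ∀ q : X → ℝ, Measurable q → (∃ M : ℝ, ∀ x, |q x| ≤ M) →
      Real.sqrt (∫ x, (q x - Q x) ^ 2 ∂μ)
        ≤ (1 - γ * C)⁻¹ *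
          Real.sqrt (∫ x, (q x - (r x + γ * ∫ y, q y ∂(κ x))) ^ 2 ∂μ) :=
  stmt_10_general μ κ r γ hγ0 C hC0 hCop hγC Q hQm hQb hQbellman
end
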